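/- arXiv:1406.3732 — 3 statements merged into one kernel-verified Lean document; each statement's English description precedes it below -/
import Mathlib

section
/- Let μ ∈ ℝ and k ∈ {0,1,2,…} be such that neither μ − k nor μ − k − 1 lies in {0, −1, −2, …}, and define φ_k(z) = Σ_{n≥0} (−z²/4)^n / (((μ−k+2)/2)_n ((μ−k+3)/2)_n). Then for all z ∈ ℂ the recurrence (μ − k + 1)·φ_{k+1}(z) = (μ − k + 1)·φ_k(z) + z·φ_k'(z) holds. -/
open scoped BigOperators

/-- The Pochhammer symbol `(a)_n = a (a+1) ⋯ (a+n-1)`. -/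
noncomputable def poch (a : ℝ) (n : ℕ) : ℝ := ∏ i ∈ Finset.range n, (a + i)

/-- The entire function `φ_k(z) = Σ_{n≥0} (−z²/4)^n / (((μ−k+2)/2)_n ((μ−k+3)/2)_n)`. -/
noncomputable def phik (μ : ℝ) (k : ℕ) (z : ℂ) : ℂ :=
  ∑' n : ℕ, (-z ^ 2 / 4) ^ n /
    ((poch ((μ - k + 2) / 2) n : ℂ) * (poch ((μ - k + 3) / 2) n : ℂ))

/-!
With `b = (μ − k + 1)/2` and `a = b + 1/2`, `φ_k(z) = F(a, b + 1; x)` and `φ_{k+1}(z) = F(b, a; x)`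
at `x = −z²/4`, where `F(a, b; x) = ₁F₂(1; a, b; x) = Σ xⁿ / ((a)_n (b)_n)`. As `z d/dz = 2x d/dx`,
the recurrence is the contiguous relation `b F(b, a) = b F(a, b + 1) + x F'(a, b + 1)`, which holds
coefficientwise because `b (b + 1)_n = (b + n) (b)_n`. The series is entire by the ratio test, so
it can be differentiated termwise.
-/

open Filter Topology FormalMultilinearSeries
open scoped NNReal

section Pochhammer

lemma poch_succ (a : ℝ) (n : ℕ) : poch a (n + 1) = poch a n * (a + n) :=
  Finset.prod_range_succ _ _

lemma add_one_add_natCast_ne_zero {a : ℝ} (ha : ∀ i : ℕ, a + i ≠ 0) (i : ℕ) :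
    a + 1 + i ≠ 0 := by
  simpa [add_right_comm, add_assoc] using ha (i + 1)

lemma poch_ne_zero {a : ℝ} (ha : ∀ i : ℕ, a + i ≠ 0) (n : ℕ) : poch a n ≠ 0 :=
  Finset.prod_ne_zero_iff.mpr fun i _ ↦ ha i

lemma mul_poch_add_one (a : ℝ) (n : ℕ) : a * poch (a + 1) n = (a + n) * poch a n := by
  induction n with
  | zero => simp [poch]
  | succ n ih =>
    rw [poch_succ, poch_succ, ← mul_assoc, ih]
    push_cast
    ring

end Pochhammer

section EntirePowerSeries

lemma natCast_mul_pow_pred_le {r : ℝ} (hr : 1 ≤ r) (n : ℕ) :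
    n * r ^ (n - 1) ≤ (2 * r) ^ n := by
  rw [mul_pow]
  gcongr
  · exact_mod_cast n.lt_two_pow_self.le
  · exact n.sub_le 1

variable {𝕜 : Type*} [RCLike 𝕜] {c : ℕ → 𝕜}

lemma summable_norm_mul_pow_of_radius_eq_top (hc : (ofScalars 𝕜 c).radius = ⊤) (r : ℝ≥0) :
    Summable fun n ↦ ‖c n‖ * (r : ℝ) ^ n := by
  simpa using (ofScalars 𝕜 c).summable_norm_mul_pow (hc ▸ ENNReal.coe_lt_top)

lemma summable_mul_pow_of_radius_eq_top (hc : (ofScalars 𝕜 c).radius = ⊤) (x : 𝕜) :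
    Summable fun n ↦ c n * x ^ n :=
  .of_norm_bounded (summable_norm_mul_pow_of_radius_eq_top hc ‖x‖₊) fun n ↦ by simp

lemma hasDerivAt_tsum_mul_pow_of_radius_eq_top (hc : (ofScalars 𝕜 c).radius = ⊤) (x : 𝕜) :
    HasDerivAt (fun y ↦ ∑' n, c n * y ^ n) (∑' n, n * c n * x ^ (n - 1)) x := by
  set R : ℝ≥0 := ‖x‖₊ + 1
  have hR : 1 ≤ (R : ℝ) := by simp [R]
  have hbound : ∀ n, ∀ y ∈ Metric.ball (0 : 𝕜) R,
      ‖n * c n * y ^ (n - 1)‖ ≤ ‖c n‖ * ((2 * R : ℝ≥0) : ℝ) ^ n := by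
    intro n y hy
    rw [mem_ball_zero_iff] at hy
    calc ‖n * c n * y ^ (n - 1)‖ = ‖c n‖ * (n * ‖y‖ ^ (n - 1)) := by simp; ring
      _ ≤ ‖c n‖ * (n * R ^ (n - 1)) := by gcongr
      _ ≤ ‖c n‖ * ((2 * R : ℝ≥0) : ℝ) ^ n := by
        gcongr
        exact_mod_cast natCast_mul_pow_pred_le hR n
  refine hasDerivAt_tsum_of_isPreconnected (summable_norm_mul_pow_of_radius_eq_top hc (2 * R))
    Metric.isOpen_ball (convex_ball _ _).isPreconnected
    (fun n y _ ↦ ?_) hbound (Metric.mem_ball_self (by positivity))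
    (summable_mul_pow_of_radius_eq_top hc 0) (by simp [R])
  simpa [mul_comm, mul_assoc] using (hasDerivAt_pow n y).const_mul (c n)

lemma summable_natCast_mul_mul_pow_of_radius_eq_top (hc : (ofScalars 𝕜 c).radius = ⊤)
    (x : 𝕜) :
    Summable fun n ↦ n * c n * x ^ n := by
  refine .of_norm_bounded (summable_norm_mul_pow_of_radius_eq_top hc (2 * ‖x‖₊)) fun n ↦ ?_
  calc ‖n * c n * x ^ n‖ = ‖c n‖ * (n * ‖x‖ ^ n) := by simp; ring
    _ ≤ ‖c n‖ * ((2 * ‖x‖₊ : ℝ≥0) : ℝ) ^ n := by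
      rw [NNReal.coe_mul, coe_nnnorm, mul_pow]
      gcongr
      exact_mod_cast n.lt_two_pow_self.le

lemma mul_deriv_tsum_mul_pow_of_radius_eq_top (hc : (ofScalars 𝕜 c).radius = ⊤) (x : 𝕜) :
    x * deriv (fun y ↦ ∑' n, c n * y ^ n) x = ∑' n, n * c n * x ^ n := by
  rw [(hasDerivAt_tsum_mul_pow_of_radius_eq_top hc x).deriv, ← tsum_mul_left]
  refine tsum_congr fun n ↦ ?_
  rcases n with _ | n
  · simp
  · rw [Nat.add_sub_cancel, pow_succ]
    ring

end EntirePowerSeries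

section Hypergeometric

noncomputable def hypergeomCoeff (a b : ℝ) (n : ℕ) : ℂ := ((poch a n : ℂ) * poch b n)⁻¹

noncomputable def hypergeom1F2One (a b : ℝ) (x : ℂ) : ℂ :=
  ∑' n : ℕ, x ^ n / ((poch a n : ℂ) * poch b n)

lemma hypergeom1F2One_eq_tsum (a b : ℝ) :
    hypergeom1F2One a b = fun x ↦ ∑' n, hypergeomCoeff a b n * x ^ n :=
  funext fun _ ↦ tsum_congr fun _ ↦ div_eq_inv_mul _ _

lemma hypergeomCoeff_succ (a b : ℝ) (n : ℕ) :
    hypergeomCoeff a b (n + 1) = hypergeomCoeff a b n * (((a + n) * (b + n) : ℝ) : ℂ)⁻¹ := by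
  simp only [hypergeomCoeff, poch_succ]
  push_cast
  simp only [mul_inv]
  ring

variable {a b : ℝ}

lemma hypergeomCoeff_ne_zero
    (ha : ∀ i : ℕ, a + i ≠ 0) (hb : ∀ i : ℕ, b + i ≠ 0) (n : ℕ) :
    hypergeomCoeff a b n ≠ 0 := by
  simp [hypergeomCoeff, poch_ne_zero ha n, poch_ne_zero hb n]

lemma radius_ofScalars_hypergeomCoeff
    (ha : ∀ i : ℕ, a + i ≠ 0) (hb : ∀ i : ℕ, b + i ≠ 0) :
    (ofScalars ℂ (hypergeomCoeff a b)).radius = ⊤ := by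
  refine ofScalars_radius_eq_top_of_tendsto _ _
    (.of_forall (hypergeomCoeff_ne_zero ha hb)) ?_
  have hprod : Tendsto (fun n : ℕ ↦ (a + n) * (b + n)) atTop atTop :=
    (tendsto_atTop_add_const_left _ _ tendsto_natCast_atTop_atTop).atTop_mul_atTop₀
      (tendsto_atTop_add_const_left _ _ tendsto_natCast_atTop_atTop)
  have hratio (n : ℕ) : ‖hypergeomCoeff a b (n + 1)‖ / ‖hypergeomCoeff a b n‖ =
      ‖((a + n) * (b + n))⁻¹‖ := by
    rw [hypergeomCoeff_succ, norm_mul, mul_div_cancel_left₀ _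
      (norm_ne_zero_iff.mpr (hypergeomCoeff_ne_zero ha hb n)), norm_inv, norm_inv,
      Complex.norm_real]
  simpa only [hratio, norm_zero, Function.comp_def] using (tendsto_inv_atTop_zero.comp hprod).norm

lemma differentiable_hypergeom1F2One
    (ha : ∀ i : ℕ, a + i ≠ 0) (hb : ∀ i : ℕ, b + i ≠ 0) :
    Differentiable ℂ (hypergeom1F2One a b) := by
  rw [hypergeom1F2One_eq_tsum]
  exact fun x ↦ (hasDerivAt_tsum_mul_pow_of_radius_eq_top
    (radius_ofScalars_hypergeomCoeff ha hb) x).differentiableAt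

theorem mul_hypergeom1F2One_eq
    (ha : ∀ i : ℕ, a + i ≠ 0) (hb : ∀ i : ℕ, b + i ≠ 0) (x : ℂ) :
    b * hypergeom1F2One b a x =
      b * hypergeom1F2One a (b + 1) x + x * deriv (hypergeom1F2One a (b + 1)) x := by
  have hb' := add_one_add_natCast_ne_zero hb
  have hc := radius_ofScalars_hypergeomCoeff ha hb'
  simp only [hypergeom1F2One_eq_tsum]
  rw [mul_deriv_tsum_mul_pow_of_radius_eq_top hc, ← tsum_mul_left, ← tsum_mul_left,
    ← ((summable_mul_pow_of_radius_eq_top hc x).mul_left _).tsum_add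
      (summable_natCast_mul_mul_pow_of_radius_eq_top hc x)]
  refine tsum_congr fun n ↦ ?_
  have hpoch : (b : ℂ) * poch (b + 1) n = (b + n) * poch b n := by
    exact_mod_cast mul_poch_add_one b n
  have hpa : (poch a n : ℂ) ≠ 0 := by exact_mod_cast poch_ne_zero ha n
  have hpb : (poch b n : ℂ) ≠ 0 := by exact_mod_cast poch_ne_zero hb n
  have hpb' : (poch (b + 1) n : ℂ) ≠ 0 := by exact_mod_cast poch_ne_zero hb' n
  simp only [hypergeomCoeff]
  field_simp
  linear_combination x ^ n * hpoch

end Hypergeometric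

lemma phik_eq_hypergeom1F2One (μ : ℝ) (k : ℕ) :
    phik μ k =
      fun z ↦ hypergeom1F2One ((μ - k + 2) / 2) ((μ - k + 1) / 2 + 1) (-z ^ 2 / 4) := by
  rw [show (μ - k + 1) / 2 + 1 = (μ - k + 3) / 2 by ring]
  rfl

lemma phik_succ_eq_hypergeom1F2One (μ : ℝ) (k : ℕ) :
    phik μ (k + 1) =
      fun z ↦ hypergeom1F2One ((μ - k + 1) / 2) ((μ - k + 2) / 2) (-z ^ 2 / 4) := by
  have h2 : (μ - (k + 1 : ℕ) + 2) / 2 = (μ - k + 1) / 2 := by push_cast; ring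
  have h3 : (μ - (k + 1 : ℕ) + 3) / 2 = (μ - k + 2) / 2 := by push_cast; ring
  ext z
  rw [phik, h2, h3, hypergeom1F2One]

theorem phik_recurrence_general (μ : ℝ) (k : ℕ)
    (hμk : ∀ m : ℕ, μ - k ≠ -(m : ℝ)) :
    ∀ z : ℂ,
      ((μ : ℂ) - k + 1) * phik μ (k + 1) z =
        ((μ : ℂ) - k + 1) * phik μ k z + z * deriv (phik μ k) z := by
  intro z
  rw [phik_succ_eq_hypergeom1F2One, phik_eq_hypergeom1F2One]
  set b := (μ - k + 1) / 2 with hb_def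
  set a := (μ - k + 2) / 2 with ha_def
  have hb (i : ℕ) : b + i ≠ 0 := fun h ↦ hμk (2 * i + 1) (by push_cast; linarith)
  have ha (i : ℕ) : a + i ≠ 0 := fun h ↦ hμk (2 * i + 2) (by push_cast; linarith)
  have hsq : HasDerivAt (fun z : ℂ ↦ -z ^ 2 / 4) (-z / 2) z :=
    ((hasDerivAt_pow 2 z).neg.div_const 4).congr_deriv (by push_cast; ring)
  have hφ : HasDerivAt (fun z ↦ hypergeom1F2One a (b + 1) (-z ^ 2 / 4))
      (deriv (hypergeom1F2One a (b + 1)) (-z ^ 2 / 4) * (-z / 2)) z :=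
    (differentiable_hypergeom1F2One ha (add_one_add_natCast_ne_zero hb)).differentiableAt
      |>.hasDerivAt.comp z hsq
  have hμ : (μ : ℂ) - k + 1 = 2 * b := by rw [hb_def]; push_cast; ring
  rw [hφ.deriv, hμ]
  linear_combination 2 * mul_hypergeom1F2One_eq ha hb (-z ^ 2 / 4)

/-- If neither `μ − k` nor `μ − k − 1` lies in `{0, −1, −2, …}`, then
`(μ − k + 1) φ_{k+1}(z) = (μ − k + 1) φ_k(z) + z φ_k'(z)` for all `z ∈ ℂ`. -/
theorem phik_recurrence (μ : ℝ) (k : ℕ)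
    (hμk : ∀ m : ℕ, μ - k ≠ -(m : ℝ))
    (hμk' : ∀ m : ℕ, μ - k - 1 ≠ -(m : ℝ)) :
    ∀ z : ℂ,
      ((μ : ℂ) - k + 1) * phik μ (k + 1) z =
        ((μ : ℂ) - k + 1) * phik μ k z + z * deriv (phik μ k) z :=
  phik_recurrence_general μ k hμk
end

section
/- Let p(x) = 1 − a₁x + a₂x² − ⋯ + (−1)ⁿ aₙ xⁿ = (1 − x/x₁)⋯(1 − x/xₙ) be a real polynomial all of whose zeros 0 < x₁ ≤ x₂ ≤ ⋯ ≤ xₙ are real and positive, normalized by p(0) = 1. Then for any real constant C, the polynomial q(x) = C·p(x) − x·p'(x) has only real zeros; moreover, the smallest zero η₁ of q belongs to the interval (0, x₁) if and only if C < 0. -/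
/-!
Away from the zeros of `p`, `q(z) = p(z) (c - ∑ⱼ z / (z - xⱼ))`. For non-real `z` the imaginary
part of `∑ⱼ z / (z - xⱼ)` is `-Im z · ∑ⱼ xⱼ / |z - xⱼ|²`, which does not vanish, so all zeros of
`q` are real. On `(-∞, x₁)` we have `p > 0`, and the sum is `≥ 0` on `(-∞, 0]` and `< 0` on
`(0, x₁)`. Hence a zero in `(0, x₁)` forces `c < 0`; conversely, if `c < 0` then `q` has no zero
in `(-∞, 0]`, `q(0) = c < 0`, and `q > 0` close to `x₁` because `t / (t - x₁) → -∞`, so the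
least zero of `q` lies in `(0, x₁)`.
-/

open Polynomial Finset

section Field

variable {K ι : Type*} [Field K] {s : Finset ι} {x : ι → K} {z : K}

theorem prod_one_sub_inv_mul_ne_zero (hx : ∀ j ∈ s, x j ≠ 0) (hz : ∀ j ∈ s, z ≠ x j) :
    ∏ j ∈ s, (1 - (x j)⁻¹ * z) ≠ 0 := by
  refine prod_ne_zero_iff.mpr fun j hj h => hz j hj ?_
  field_simp [hx j hj] at h
  linear_combination -h

theorem eval_derivative_prod_one_sub_C_inv_mul_X (hx : ∀ j ∈ s, x j ≠ 0)
    (hz : ∀ j ∈ s, z ≠ x j) :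
    (∏ j ∈ s, (1 - C (x j)⁻¹ * X)).derivative.eval z
      = (∏ j ∈ s, (1 - (x j)⁻¹ * z)) * ∑ j ∈ s, 1 / (z - x j) := by
  classical
  rw [derivative_prod_finset, eval_finsetSum, mul_sum]
  refine sum_congr rfl fun j hj => ?_
  simp only [eval_mul, eval_prod, derivative_sub, derivative_one, derivative_C_mul_X, eval_sub,
    eval_one, eval_C, eval_X, zero_sub, eval_neg]
  rw [← mul_prod_erase s _ hj]
  field_simp [hx j hj, sub_ne_zero.mpr (hz j hj)]
  ring

theorem eval_C_mul_sub_X_mul_derivative_prod (hx : ∀ j ∈ s, x j ≠ 0)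
    (hz : ∀ j ∈ s, z ≠ x j) (c : K) :
    (C c * ∏ j ∈ s, (1 - C (x j)⁻¹ * X) - X * (∏ j ∈ s, (1 - C (x j)⁻¹ * X)).derivative).eval z
      = (∏ j ∈ s, (1 - (x j)⁻¹ * z)) * (c - ∑ j ∈ s, z / (z - x j)) := by
  have hsum : z * ∑ j ∈ s, 1 / (z - x j) = ∑ j ∈ s, z / (z - x j) := by
    simp only [mul_sum, mul_one_div]
  rw [eval_sub, eval_mul, eval_mul, eval_C, eval_X, eval_derivative_prod_one_sub_C_inv_mul_X hx hz,
    eval_prod, ← hsum]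
  simp only [eval_sub, eval_one, eval_mul, eval_C, eval_X]
  ring

theorem eq_sum_div_sub_of_eval_eq_zero (hx : ∀ j ∈ s, x j ≠ 0) (hz : ∀ j ∈ s, z ≠ x j) {c : K}
    (hq : (C c * ∏ j ∈ s, (1 - C (x j)⁻¹ * X)
      - X * (∏ j ∈ s, (1 - C (x j)⁻¹ * X)).derivative).eval z = 0) :
    c = ∑ j ∈ s, z / (z - x j) := by
  rw [eval_C_mul_sub_X_mul_derivative_prod hx hz] at hq
  exact sub_eq_zero.mp ((mul_eq_zero.mp hq).resolve_left (prod_one_sub_inv_mul_ne_zero hx hz))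

end Field

section Complex

variable {ι : Type*} {s : Finset ι} {x : ι → ℝ}

theorem Complex.im_div_sub_ofReal (z : ℂ) (a : ℝ) :
    (z / (z - a)).im = -(a * z.im) / Complex.normSq (z - a) := by
  rw [Complex.div_im]
  simp only [Complex.sub_im, Complex.sub_re, Complex.ofReal_im, Complex.ofReal_re]
  ring

theorem Complex.im_sum_div_sub_ofReal (s : Finset ι) (z : ℂ) (x : ι → ℝ) :
    (∑ j ∈ s, z / (z - x j)).im = -z.im * ∑ j ∈ s, x j / Complex.normSq (z - x j) := by
  simp only [Complex.im_sum, Complex.im_div_sub_ofReal, mul_sum]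
  exact sum_congr rfl fun j _ => by ring

theorem im_eq_zero_of_aeval_eq_zero (hs : s.Nonempty) (hx : ∀ j ∈ s, 0 < x j) (c : ℝ) {z : ℂ}
    (hq : aeval z (C c * ∏ j ∈ s, (1 - C (x j)⁻¹ * X)
      - X * (∏ j ∈ s, (1 - C (x j)⁻¹ * X)).derivative) = 0) :
    z.im = 0 := by
  by_contra him
  have hz : ∀ j ∈ s, z ≠ (x j : ℂ) := fun j _ h => him (by simp [h])
  have hq' : (C (c : ℂ) * ∏ j ∈ s, (1 - C ((x j : ℂ))⁻¹ * X)
      - X * (∏ j ∈ s, (1 - C ((x j : ℂ))⁻¹ * X)).derivative).eval z = 0 := by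
    rw [aeval_def, eval₂_eq_eval_map, Polynomial.map_sub, Polynomial.map_mul, Polynomial.map_mul, ← derivative_map] at hq
    simpa only [map_C, map_X, Polynomial.map_prod, Polynomial.map_sub, Polynomial.map_one,
      Polynomial.map_mul, map_inv₀, Complex.coe_algebraMap] using hq
  have hc := congrArg Complex.im
    (eq_sum_div_sub_of_eval_eq_zero (fun j hj => by exact_mod_cast (hx j hj).ne') hz hq')
  have hpos : 0 < ∑ j ∈ s, x j / Complex.normSq (z - x j) :=
    sum_pos (fun j hj => div_pos (hx j hj) (Complex.normSq_pos.mpr (sub_ne_zero.mpr (hz j hj)))) hs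
  rw [Complex.ofReal_im, Complex.im_sum_div_sub_ofReal] at hc
  exact him (neg_eq_zero.mp ((mul_eq_zero.mp hc.symm).resolve_right hpos.ne'))

end Complex

section Real

variable {ι : Type*} {s : Finset ι} {x : ι → ℝ} {c t : ℝ}

theorem sum_div_sub_nonneg_of_nonpos (hx : ∀ j ∈ s, 0 < x j) (ht : t ≤ 0) :
    0 ≤ ∑ j ∈ s, t / (t - x j) :=
  sum_nonneg fun j hj => div_nonneg_of_nonpos ht (by linarith [hx j hj])

theorem sum_div_sub_neg (hs : s.Nonempty) (ht₀ : 0 < t) (ht : ∀ j ∈ s, t < x j) :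
    ∑ j ∈ s, t / (t - x j) < 0 :=
  sum_neg (fun j hj => div_neg_of_pos_of_neg ht₀ (sub_neg.mpr (ht j hj))) hs

theorem neg_of_eval_eq_zero (hs : s.Nonempty) (hx : ∀ j ∈ s, 0 < x j) (ht₀ : 0 < t)
    (ht : ∀ j ∈ s, t < x j)
    (hq : (C c * ∏ j ∈ s, (1 - C (x j)⁻¹ * X)
      - X * (∏ j ∈ s, (1 - C (x j)⁻¹ * X)).derivative).eval t = 0) :
    c < 0 :=
  eq_sum_div_sub_of_eval_eq_zero (fun j hj => (hx j hj).ne') (fun j hj => (ht j hj).ne) hq ▸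
    sum_div_sub_neg hs ht₀ ht

theorem pos_of_eval_eq_zero (hx : ∀ j ∈ s, 0 < x j) (hc : c < 0)
    (hq : (C c * ∏ j ∈ s, (1 - C (x j)⁻¹ * X)
      - X * (∏ j ∈ s, (1 - C (x j)⁻¹ * X)).derivative).eval t = 0) :
    0 < t := by
  by_contra! ht
  have hc' := eq_sum_div_sub_of_eval_eq_zero (fun j hj => (hx j hj).ne')
    (fun j hj => (ht.trans_lt (hx j hj)).ne) hq
  linarith [sum_div_sub_nonneg_of_nonpos hx ht]

theorem prod_one_sub_inv_mul_pos (hx : ∀ j ∈ s, 0 < x j) (ht : ∀ j ∈ s, t < x j) :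
    0 < ∏ j ∈ s, (1 - (x j)⁻¹ * t) :=
  prod_pos fun j hj => sub_pos.mpr ((inv_mul_lt_one₀ (hx j hj)).mpr (ht j hj))

theorem exists_mem_Ioo_eval_pos {i : ι} (hi : i ∈ s) (hx : ∀ j ∈ s, 0 < x j)
    (hmin : ∀ j ∈ s, x i ≤ x j) (hc : c < 0) :
    ∃ t ∈ Set.Ioo 0 (x i), 0 < (C c * ∏ j ∈ s, (1 - C (x j)⁻¹ * X)
      - X * (∏ j ∈ s, (1 - C (x j)⁻¹ * X)).derivative).eval t := by
  classical
  set t := x i * (1 - c) / (2 - c) with ht_def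
  have hxi := hx i hi
  have ht₀ : 0 < t := div_pos (mul_pos hxi (by linarith)) (by linarith)
  have hti : t < x i := by
    rw [ht_def, div_lt_iff₀ (by linarith)]
    nlinarith
  have ht : ∀ j ∈ s, t < x j := fun j hj => hti.trans_le (hmin j hj)
  have hterm : t / (t - x i) = c - 1 := by
    have h2c : 2 - c ≠ 0 := by linarith
    rw [ht_def, div_eq_iff (by linarith)]
    field_simp
    ring
  have hrest : ∑ j ∈ s.erase i, t / (t - x j) ≤ 0 :=
    sum_nonpos fun j hj => (div_neg_of_pos_of_neg ht₀ (sub_neg.mpr (ht j (mem_of_mem_erase hj)))).le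
  refine ⟨t, ⟨ht₀, hti⟩, ?_⟩
  rw [eval_C_mul_sub_X_mul_derivative_prod (fun j hj => (hx j hj).ne') (fun j hj => (ht j hj).ne),
    ← add_sum_erase s _ hi, hterm]
  exact mul_pos (prod_one_sub_inv_mul_pos hx ht) (by linarith)

theorem exists_isLeast_root_mem_Ioo {i : ι} (hi : i ∈ s) (hx : ∀ j ∈ s, 0 < x j)
    (hmin : ∀ j ∈ s, x i ≤ x j) (hc : c < 0) :
    ∃ η, IsLeast {t | (C c * ∏ j ∈ s, (1 - C (x j)⁻¹ * X)
      - X * (∏ j ∈ s, (1 - C (x j)⁻¹ * X)).derivative).eval t = 0} η ∧ η ∈ Set.Ioo 0 (x i) := by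
  set q := C c * ∏ j ∈ s, (1 - C (x j)⁻¹ * X) - X * (∏ j ∈ s, (1 - C (x j)⁻¹ * X)).derivative
  obtain ⟨t, ⟨ht₀, hti⟩, hqt⟩ := exists_mem_Ioo_eval_pos hi hx hmin hc
  have hq₀ : q.eval 0 = c := by simp [q, eval_prod]
  obtain ⟨η', ⟨-, hη't⟩, hη'⟩ := intermediate_value_Ioo ht₀.le q.continuous.continuousOn
    (show (0 : ℝ) ∈ Set.Ioo (q.eval 0) (q.eval t) from hq₀ ▸ ⟨hc, hqt⟩)
  have hroots_bdd : BddBelow {t | q.eval t = 0} :=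
    ⟨0, fun t ht => (pos_of_eval_eq_zero hx hc ht).le⟩
  have hleast := (isClosed_eq q.continuous continuous_const).isLeast_csInf ⟨η', hη'⟩ hroots_bdd
  exact ⟨_, hleast, pos_of_eval_eq_zero hx hc hleast.1,
    (hleast.2 hη').trans_lt (hη't.trans hti)⟩

theorem exists_isLeast_root_mem_Ioo_iff {i : ι} (hi : i ∈ s) (hx : ∀ j ∈ s, 0 < x j)
    (hmin : ∀ j ∈ s, x i ≤ x j) :
    (∃ η, IsLeast {t | (C c * ∏ j ∈ s, (1 - C (x j)⁻¹ * X)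
      - X * (∏ j ∈ s, (1 - C (x j)⁻¹ * X)).derivative).eval t = 0} η ∧ η ∈ Set.Ioo 0 (x i))
      ↔ c < 0 :=
  ⟨fun ⟨_, hη, hη₀, hηi⟩ => neg_of_eval_eq_zero ⟨i, hi⟩ hx hη₀
      (fun j hj => hηi.trans_le (hmin j hj)) hη.1,
    exists_isLeast_root_mem_Ioo hi hx hmin⟩

end Real

/-- Let `p(x) = ∏_{j=1}^n (1 − x/x_j)` be a hyperbolic polynomial with
positive zeros `0 < x₁ ≤ x₂ ≤ ⋯ ≤ xₙ`, normalized by `p(0) = 1`. Then for any real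
constant `c`, the polynomial `q(x) = c p(x) − x p'(x)` has only real zeros; moreover,
`q` has a smallest (real) zero `η₁` lying in `(0, x₁)` if and only if `c < 0`. -/
theorem hyperbolic_linear_combination (n : ℕ) (hn : 1 ≤ n) (x : ℕ → ℝ)
    (hpos : ∀ j, j < n → 0 < x j)
    (hmono : ∀ i j, i ≤ j → j < n → x i ≤ x j)
    (P : Polynomial ℝ)
    (hP : P = ∏ j ∈ Finset.range n, (1 - Polynomial.C (x j)⁻¹ * Polynomial.X))
    (c : ℝ) (Q : Polynomial ℝ)
    (hQ : Q = Polynomial.C c * P - Polynomial.X * Polynomial.derivative P) :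
    (∀ z : ℂ, Polynomial.aeval z Q = 0 → z.im = 0) ∧
    ((∃ η : ℝ, IsLeast {t : ℝ | Q.eval t = 0} η ∧ η ∈ Set.Ioo 0 (x 0)) ↔ c < 0) := by
  subst hQ hP
  have h0 : 0 ∈ range n := mem_range.mpr hn
  have hx : ∀ j ∈ range n, 0 < x j := fun j hj => hpos j (mem_range.mp hj)
  have hmin : ∀ j ∈ range n, x 0 ≤ x j := fun j hj => hmono 0 j j.zero_le (mem_range.mp hj)
  exact ⟨fun z hz => im_eq_zero_of_aeval_eq_zero ⟨0, h0⟩ hx c hz,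
    exists_isLeast_root_mem_Ioo_iff h0 hx hmin⟩
end

section
/- Consider power series f(x) = Σ_{n≥0} aₙ x^{2n} and g(x) = Σ_{n≥0} bₙ x^{2n} with aₙ ∈ ℝ and bₙ > 0 for all n ≥ 0, both convergent on (−r, r) for some r > 0. If the sequence {aₙ/bₙ}_{n≥0} is increasing (respectively, decreasing), then the function x ↦ f(x)/g(x) is increasing (respectively, decreasing) on (0, r). -/
/-!
Substituting `t = x²` reduces the claim to ordinary power series `Σ aₙ tⁿ`, `Σ bₙ tⁿ` on a set of
nonnegative reals. For `0 ≤ s ≤ t`, the difference `f(s) g(t) - f(t) g(s)` is the double sum of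
`aₙ bₘ (sⁿ tᵐ - tⁿ sᵐ)`; symmetrizing in `(n, m)` turns its terms into
`(aₙ bₘ - aₘ bₙ) (sⁿ tᵐ - tⁿ sᵐ)`, and when `aₙ / bₙ` increases the two factors have opposite signs.
-/

open Set

theorem summable_norm_mul_pow_of_summable_mul_pow {𝕜 : Type*} [NormedField 𝕜] {a : ℕ → 𝕜}
    {s t : 𝕜} (ht : Summable fun n => a n * t ^ n) (hst : ‖s‖ < ‖t‖) :
    Summable fun n => ‖a n * s ^ n‖ := by
  obtain ⟨C, hC⟩ := ht.tendsto_atTop_zero.norm.bddAbove_range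
  have ht0 : 0 < ‖t‖ := (norm_nonneg s).trans_lt hst
  have hgeom : Summable fun n => C * (‖s‖ / ‖t‖) ^ n :=
    (summable_geometric_of_lt_one (by positivity) ((div_lt_one ht0).2 hst)).mul_left C
  refine hgeom.of_nonneg_of_le (fun n => norm_nonneg _) fun n => ?_
  calc ‖a n * s ^ n‖ = ‖a n * t ^ n‖ * (‖s‖ / ‖t‖) ^ n := by
        rw [norm_mul, norm_mul, norm_pow, norm_pow, div_pow]
        field_simp
    _ ≤ C * (‖s‖ / ‖t‖) ^ n := by gcongr; exact hC ⟨n, rfl⟩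

theorem tsum_nonpos_of_add_swap_nonpos {α : Type*} {F : α × α → ℝ} (hF : Summable F)
    (h : ∀ p, F p + F p.swap ≤ 0) : ∑' p, F p ≤ 0 := by
  have hswap : ∑' p : α × α, F p.swap = ∑' p, F p := (Equiv.prodComm α α).tsum_eq F
  have hsum : ∑' p : α × α, (F p + F p.swap) ≤ 0 := tsum_nonpos h
  have hF_swap : Summable fun p : α × α => F p.swap := (Equiv.prodComm α α).summable_iff.2 hF
  rw [hF.tsum_add hF_swap, hswap] at hsum
  linarith

theorem pow_mul_pow_le_pow_mul_pow {s t : ℝ} (hs : 0 ≤ s) (hst : s ≤ t) {n m : ℕ} (hnm : n ≤ m) :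
    t ^ n * s ^ m ≤ s ^ n * t ^ m := by
  obtain ⟨k, rfl⟩ := Nat.exists_eq_add_of_le hnm
  have hsk : s ^ k ≤ t ^ k := pow_le_pow_left₀ hs hst k
  have ht : 0 ≤ t := hs.trans hst
  calc t ^ n * s ^ (n + k) = s ^ n * t ^ n * s ^ k := by ring
    _ ≤ s ^ n * t ^ n * t ^ k := by gcongr
    _ = s ^ n * t ^ (n + k) := by ring

section QuotientOfPowerSeries

variable {a b : ℕ → ℝ}

theorem cross_mul_sub_mul_pow_nonpos (hab : ∀ ⦃n m⦄, n ≤ m → a n * b m ≤ a m * b n)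
    {s t : ℝ} (hs : 0 ≤ s) (hst : s ≤ t) (n m : ℕ) :
    (a n * b m - a m * b n) * (s ^ n * t ^ m - t ^ n * s ^ m) ≤ 0 := by
  rcases le_total n m with hnm | hmn
  · exact mul_nonpos_of_nonpos_of_nonneg (sub_nonpos.2 (hab hnm))
      (sub_nonneg.2 (pow_mul_pow_le_pow_mul_pow hs hst hnm))
  · exact mul_nonpos_of_nonneg_of_nonpos
      (by linarith [hab hmn]) (by linarith [pow_mul_pow_le_pow_mul_pow hs hst hmn])

theorem tsum_mul_pow_mul_tsum_mul_pow_le (hab : ∀ ⦃n m⦄, n ≤ m → a n * b m ≤ a m * b n)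
    {s t : ℝ} (hs : 0 ≤ s) (hst : s ≤ t)
    (has : Summable fun n => ‖a n * s ^ n‖) (hat : Summable fun n => ‖a n * t ^ n‖)
    (hbs : Summable fun n => ‖b n * s ^ n‖) (hbt : Summable fun n => ‖b n * t ^ n‖) :
    (∑' n, a n * s ^ n) * (∑' n, b n * t ^ n) ≤ (∑' n, a n * t ^ n) * (∑' n, b n * s ^ n) := by
  have hsum_st := summable_mul_of_summable_norm has hbt
  have hsum_ts := summable_mul_of_summable_norm hat hbs
  rw [tsum_mul_tsum_of_summable_norm has hbt, tsum_mul_tsum_of_summable_norm hat hbs,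
    ← sub_nonpos, ← hsum_st.tsum_sub hsum_ts]
  refine tsum_nonpos_of_add_swap_nonpos (hsum_st.sub hsum_ts) fun ⟨n, m⟩ => ?_
  have key := cross_mul_sub_mul_pow_nonpos hab hs hst n m
  simp only [Prod.swap]
  linarith

theorem tsum_mul_pow_pos (hb : ∀ n, 0 < b n) {t : ℝ} (ht : 0 ≤ t)
    (hbt : Summable fun n => b n * t ^ n) : 0 < ∑' n, b n * t ^ n :=
  hbt.tsum_pos (fun n => mul_nonneg (hb n).le (pow_nonneg ht n)) 0 (by simpa using hb 0)

theorem monotoneOn_tsum_mul_pow_div_tsum_mul_pow (hb : ∀ n, 0 < b n)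
    (hab : Monotone fun n => a n / b n) {S : Set ℝ} (hS : S ⊆ Ici 0)
    (ha : ∀ t ∈ S, Summable fun n => ‖a n * t ^ n‖)
    (hbS : ∀ t ∈ S, Summable fun n => ‖b n * t ^ n‖) :
    MonotoneOn (fun t => (∑' n, a n * t ^ n) / ∑' n, b n * t ^ n) S := by
  intro s hs t ht hst
  have hcross : ∀ ⦃n m⦄, n ≤ m → a n * b m ≤ a m * b n := fun n m hnm =>
    (div_le_div_iff₀ (hb n) (hb m)).1 (hab hnm)
  rw [div_le_div_iff₀ (tsum_mul_pow_pos hb (hS hs) (hbS s hs).of_norm)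
    (tsum_mul_pow_pos hb (hS ht) (hbS t ht).of_norm)]
  exact tsum_mul_pow_mul_tsum_mul_pow_le hcross (hS hs) hst (ha s hs) (ha t ht) (hbS s hs)
    (hbS t ht)

theorem antitoneOn_tsum_mul_pow_div_tsum_mul_pow (hb : ∀ n, 0 < b n)
    (hab : Antitone fun n => a n / b n) {S : Set ℝ} (hS : S ⊆ Ici 0)
    (ha : ∀ t ∈ S, Summable fun n => ‖a n * t ^ n‖)
    (hbS : ∀ t ∈ S, Summable fun n => ‖b n * t ^ n‖) :
    AntitoneOn (fun t => (∑' n, a n * t ^ n) / ∑' n, b n * t ^ n) S := by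
  have hneg := monotoneOn_tsum_mul_pow_div_tsum_mul_pow (a := fun n => -a n) hb
    (fun n m hnm => by simpa only [neg_div, neg_le_neg_iff] using hab hnm) hS
    (fun t ht => by simpa only [neg_mul, norm_neg] using ha t ht) hbS
  intro s hs t ht hst
  simpa only [neg_mul, tsum_neg, neg_div, neg_le_neg_iff] using hneg hs ht hst

end QuotientOfPowerSeries

theorem summable_norm_mul_sq_pow {r : ℝ} {a : ℕ → ℝ}
    (ha : ∀ x ∈ Ioo (-r) r, Summable fun n => a n * x ^ (2 * n)) :
    ∀ t ∈ (· ^ 2) '' Ioo 0 r, Summable fun n => ‖a n * t ^ n‖ := by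
  rintro _ ⟨x, ⟨hx0, hxr⟩, rfl⟩
  obtain ⟨y, hxy, hyr⟩ := exists_between hxr
  refine summable_norm_mul_pow_of_summable_mul_pow (t := y ^ 2) ?_ ?_
  · simpa only [pow_mul] using ha y ⟨by linarith, hyr⟩
  · rw [Real.norm_of_nonneg (by positivity), Real.norm_of_nonneg (by positivity)]
    exact pow_lt_pow_left₀ hxy hx0.le two_ne_zero

theorem monotone_quotient_even_power_series_general (r : ℝ) (a b : ℕ → ℝ)
    (hb : ∀ n, 0 < b n)
    (ha : ∀ x ∈ Set.Ioo (-r) r, Summable (fun n : ℕ => a n * x ^ (2 * n)))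
    (hbs : ∀ x ∈ Set.Ioo (-r) r, Summable (fun n : ℕ => b n * x ^ (2 * n))) :
    (Monotone (fun n : ℕ => a n / b n) →
      MonotoneOn (fun x : ℝ => (∑' n : ℕ, a n * x ^ (2 * n)) / (∑' n : ℕ, b n * x ^ (2 * n)))
        (Set.Ioo 0 r)) ∧
    (Antitone (fun n : ℕ => a n / b n) →
      AntitoneOn (fun x : ℝ => (∑' n : ℕ, a n * x ^ (2 * n)) / (∑' n : ℕ, b n * x ^ (2 * n)))
        (Set.Ioo 0 r)) := by
  have hS : (· ^ 2) '' Ioo (0 : ℝ) r ⊆ Ici 0 := by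
    rintro _ ⟨x, -, rfl⟩
    exact sq_nonneg x
  have hsq : MonotoneOn (· ^ 2 : ℝ → ℝ) (Ioo 0 r) := fun x hx y _ hxy =>
    pow_le_pow_left₀ hx.1.le hxy 2
  simp_rw [pow_mul]
  exact ⟨fun hab => (monotoneOn_tsum_mul_pow_div_tsum_mul_pow hb hab hS
      (summable_norm_mul_sq_pow ha) (summable_norm_mul_sq_pow hbs)).comp hsq (mapsTo_image _ _),
    fun hab => (antitoneOn_tsum_mul_pow_div_tsum_mul_pow hb hab hS
      (summable_norm_mul_sq_pow ha) (summable_norm_mul_sq_pow hbs)).comp_MonotoneOn hsq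
        (mapsTo_image _ _)⟩

/-- (Biernacki–Krzyż type lemma for even power series.)
Let `f(x) = Σ aₙ x^{2n}` and `g(x) = Σ bₙ x^{2n}` with `bₙ > 0`, both convergent on
`(−r, r)`. If `{aₙ/bₙ}` is increasing (resp. decreasing), then `x ↦ f(x)/g(x)` is
increasing (resp. decreasing) on `(0, r)`. -/
theorem monotone_quotient_even_power_series (r : ℝ) (hr : 0 < r) (a b : ℕ → ℝ)
    (hb : ∀ n, 0 < b n)
    (ha : ∀ x ∈ Set.Ioo (-r) r, Summable (fun n : ℕ => a n * x ^ (2 * n)))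
    (hbs : ∀ x ∈ Set.Ioo (-r) r, Summable (fun n : ℕ => b n * x ^ (2 * n))) :
    (Monotone (fun n : ℕ => a n / b n) →
      MonotoneOn (fun x : ℝ => (∑' n : ℕ, a n * x ^ (2 * n)) / (∑' n : ℕ, b n * x ^ (2 * n)))
        (Set.Ioo 0 r)) ∧
    (Antitone (fun n : ℕ => a n / b n) →
      AntitoneOn (fun x : ℝ => (∑' n : ℕ, a n * x ^ (2 * n)) / (∑' n : ℕ, b n * x ^ (2 * n)))
        (Set.Ioo 0 r)) :=
  monotone_quotient_even_power_series_general r a b hb ha hbs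
end
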